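/- Assume ϖ_k is minuscule and J = I \ {k}. If y, w ∈ W^J satisfy w ≥ y in the Bruhat order, then there exist a chain y = y_0, y_1, …, y_p = w in W^J and indices j_1, …, j_p ∈ I with y_q = s_{j_q} y_{q-1} and ℓ(y_q) = ℓ(y_{q-1}) + 1 for all q; that is, the Bruhat order on W^J coincides with the left weak order on W^J. -/

import Mathlib

/-- An axiomatized finite crystallographic root system datum, with weight/root
space `V` over `ℚ`, simple roots `α i`, an invariant inner product `B`,
Weyl group `W` acting faithfully on `V`, and the set of roots `isRoot`. -/
structure RootSystemData (I : Type) [Fintype I] [DecidableEq I] where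
  V : Type
  [instAddCommGroup : AddCommGroup V]
  [instModule : Module ℚ V]
  W : Type
  [instGroup : Group W]
  α : I → V
  B : V →ₗ[ℚ] V →ₗ[ℚ] ℚ
  toLin : W →* Module.End ℚ V
  s : I → W
  isRoot : V → Prop
  B_symm : ∀ x y, B x y = B y x
  B_pos : ∀ β, isRoot β → 0 < B β β
  B_inv : ∀ (w : W) (x y : V), B (toLin w x) (toLin w y) = B x y
  root_simple : ∀ i, isRoot (α i)
  root_inv : ∀ (w : W) (β : V), isRoot β → isRoot (toLin w β)
  root_gen : ∀ β, isRoot β → ∃ (w : W) (i : I), β = toLin w (α i)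
  root_finite : (setOf isRoot).Finite
  indep : LinearIndependent ℚ α
  s_act : ∀ i x, toLin (s i) x = x - (2 * B (α i) x / B (α i) (α i)) • α i
  gen : Subgroup.closure (Set.range s) = ⊤
  faithful : Function.Injective toLin
  root_int : ∀ β, isRoot β → ∃ c : I → ℤ, β = ∑ i, (c i : ℚ) • α i
  pos_or_neg : ∀ β, isRoot β →
    (∃ c : I → ℕ, β = ∑ i, (c i : ℚ) • α i) ∨ (∃ c : I → ℕ, -β = ∑ i, (c i : ℚ) • α i)

attribute [instance] RootSystemData.instAddCommGroup RootSystemData.instModule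
  RootSystemData.instGroup

namespace RootSystemData

variable {I : Type} [Fintype I] [DecidableEq I] (R : RootSystemData I)

/-- `β` is a positive root. -/
def IsPos (β : R.V) : Prop :=
  R.isRoot β ∧ ∃ c : I → ℕ, β = ∑ i, (c i : ℚ) • R.α i

/-- The finite set of positive roots. -/
noncomputable def posFinset : Finset R.V :=
  (Set.Finite.subset R.root_finite (fun _ hb => hb.1) : (setOf R.IsPos).Finite).toFinset

/-- Half the sum of the positive roots. -/
noncomputable def ρ : R.V := (2 : ℚ)⁻¹ • ∑ β ∈ R.posFinset, β

/-- The pairing `⟨x, β∨⟩` of `x` with the coroot of `β`. -/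
noncomputable def coroot (β x : R.V) : ℚ := 2 * R.B β x / R.B β β

open Classical in
/-- The reflection `s_β ∈ W` in a root `β`. -/
noncomputable def refl (β : R.V) : R.W :=
  if h : R.isRoot β then
    (R.root_gen β h).choose * R.s (R.root_gen β h).choose_spec.choose *
      (R.root_gen β h).choose⁻¹
  else 1

/-- The length function on the Weyl group. -/
noncomputable def len (w : R.W) : ℕ :=
  sInf {n | ∃ l : List I, l.length = n ∧ (l.map R.s).prod = w}

/-- Bruhat order: generated by multiplication by reflections which increases length. -/
def bruhatLE : R.W → R.W → Prop :=
  Relation.ReflTransGen (fun u v => (∃ β, R.IsPos β ∧ v = R.refl β * u) ∧ R.len u < R.len v)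

def bruhatLT (u v : R.W) : Prop := R.bruhatLE u v ∧ u ≠ v

/-- The parabolic subgroup `W_J`. -/
def WJ (J : Set I) : Subgroup R.W := Subgroup.closure (R.s '' J)

/-- `w` is a minimal-length representative of its coset `w W_J`. -/
def IsMinRep (J : Set I) (w : R.W) : Prop :=
  ∀ z ∈ R.WJ J, R.len w ≤ R.len (w * z)

/-- `β ∈ Δ⁺_J`: positive roots in the span of the simple roots indexed by `J`. -/
def posJ (J : Set I) (β : R.V) : Prop :=
  R.IsPos β ∧ β ∈ Submodule.span ℚ (R.α '' J)

/-- A Bruhat edge `x → x s_β` in the quantum Bruhat graph. -/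
def BruhatEdge (x : R.W) (β : R.V) : Prop :=
  R.IsPos β ∧ R.len (x * R.refl β) = R.len x + 1

/-- A quantum edge `x → x s_β` in the quantum Bruhat graph. -/
def QuantumEdge (x : R.W) (β : R.V) : Prop :=
  R.IsPos β ∧ (R.len (x * R.refl β) : ℚ) = R.len x + 1 - 2 * R.coroot β R.ρ

/-- An edge of the quantum Bruhat graph. -/
def QBGEdge (x : R.W) (β : R.V) : Prop := R.BruhatEdge x β ∨ R.QuantumEdge x β

/-- A quantum root: `ℓ(s_β) = 2⟨ρ, β∨⟩ - 1`. -/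
def IsQuantumRoot (β : R.V) : Prop :=
  R.IsPos β ∧ (R.len (R.refl β) : ℚ) = 2 * R.coroot β R.ρ - 1

/-- A long root (maximal squared length); in simply-laced type all roots are long. -/
def IsLong (β : R.V) : Prop :=
  R.isRoot β ∧ ∀ γ, R.isRoot γ → R.B γ γ ≤ R.B β β

/-- A short root. -/
def IsShort (β : R.V) : Prop := R.isRoot β ∧ ¬ R.IsLong β

def IsSimplyLaced : Prop :=
  ∀ β γ, R.isRoot β → R.isRoot γ → R.B β β = R.B γ γ

def IsIrreducible : Prop :=
  Nonempty I ∧ ∀ J : Set I,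
    (∀ i ∈ J, ∀ j ∉ J, R.B (R.α i) (R.α j) = 0) → J = ∅ ∨ J = Set.univ

/-- `θ` is the highest root. -/
def IsHighestRoot (θ : R.V) : Prop :=
  R.IsPos θ ∧ ∀ β, R.IsPos β → ∃ c : I → ℕ, θ - β = ∑ i, (c i : ℚ) • R.α i

/-- `ϖ` is the fundamental weight associated to `k`. -/
def IsFundamental (k : I) (ϖ : R.V) : Prop :=
  ∀ i, R.coroot (R.α i) ϖ = if i = k then 1 else 0

/-- `ϖ` is minuscule. -/
def IsMinuscule (ϖ : R.V) : Prop :=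
  ∀ β, R.isRoot β → R.coroot β ϖ ∈ ({-1, 0, 1} : Set ℚ)

/-- A strict total order on `Δ⁺` which is a reflection (convex) order. -/
def IsReflectionOrder (lt : R.V → R.V → Prop) : Prop :=
  (∀ β, ¬ lt β β) ∧ (∀ a b c, lt a b → lt b c → lt a c) ∧
  (∀ β γ, R.IsPos β → R.IsPos γ → β ≠ γ → lt β γ ∨ lt γ β) ∧
  (∀ β γ, R.IsPos β → R.IsPos γ → R.IsPos (β + γ) →
    (lt β (β + γ) ∧ lt (β + γ) γ) ∨ (lt γ (β + γ) ∧ lt (β + γ) β))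

end RootSystemData

open RootSystemData in
/-- A directed path in the quantum Bruhat graph with the given list of labels. -/
def QBGPath {I : Type} [Fintype I] [DecidableEq I] (R : RootSystemData I) :
    R.W → List R.V → R.W → Prop
  | x, [], y => x = y
  | x, β :: l, y => R.QBGEdge x β ∧ QBGPath R (x * R.refl β) l y

open RootSystemData in
/-- A directed path in the Bruhat graph (Bruhat edges only). -/
def BGPath {I : Type} [Fintype I] [DecidableEq I] (R : RootSystemData I) :
    R.W → List R.V → R.W → Prop
  | x, [], y => x = y
  | x, β :: l, y => R.BruhatEdge x β ∧ BGPath R (x * R.refl β) l y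

/-- The Cartan pairing `⟨α_j, α_i∨⟩` of type `B_n` (Bourbaki labelling, shifted
to be 0-based: the short simple root is the last one, index `n-1`). -/
def BCartan (n : ℕ) (i j : Fin n) : ℚ :=
  if i = j then 2
  else if (i : ℕ) = n - 1 ∧ (j : ℕ) + 1 = n - 1 then -2
  else if ((i : ℕ) + 1 = j ∨ (j : ℕ) + 1 = i) then -1
  else 0

/-- `R` is of type `B_n` (via the identification `e` of its index set with `Fin n`). -/
def IsTypeB {I : Type} [Fintype I] [DecidableEq I] (R : RootSystemData I)
    (n : ℕ) (e : I ≃ Fin n) : Prop :=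
  2 ≤ n ∧ ∀ i j, R.coroot (R.α i) (R.α j) = BCartan n (e i) (e j)

/-- The product `s_{a+1} s_{a+2} ⋯ s_{b+1}` (0-based: indices `a, a+1, …, b`). -/
noncomputable def sSeq {n : ℕ} (hn : 0 < n) (R : RootSystemData (Fin n)) (a b : ℕ) : R.W :=
  ((List.range (b + 1 - a)).map (fun t => R.s ⟨(a + t) % n, Nat.mod_lt _ hn⟩)).prod

/-- The sum `α_{a+1} + ⋯ + α_b` of simple roots (0-based half-open interval `[a, b)`). -/
def aSum {n : ℕ} (hn : 0 < n) (R : RootSystemData (Fin n)) (a b : ℕ) : R.V :=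
  ∑ t ∈ Finset.Ico a b, R.α ⟨t % n, Nat.mod_lt _ hn⟩

/-!
Let `ϖ` be dominant and `J = {i | ⟨ϖ, α_i∨⟩ = 0}`. The stabiliser of `ϖ` is `W_J`, and a left
descent `s_i` of `w ∈ W^J` has `⟨wϖ, α_i∨⟩ < 0`; hence it is also a left descent of every
`y ∈ W^J` with `yϖ = wϖ`, and `w ↦ wϖ` is injective on `W^J`. Descending along a reduced word
also gives `B(ϖ, zϖ) < B(ϖ, ϖ)` whenever `zϖ ≠ ϖ`.

If `ϖ` is minuscule, every Bruhat step `u → s_β u` has `⟨uϖ, β∨⟩ ∈ {0, 1}`, so `y ≤ w` makes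
`yϖ - wϖ = ∑ c_i α_i` with `c_i ∈ ℕ`. When `yϖ ≠ wϖ`,
`B(yϖ - wϖ, wϖ) = B(ϖ, y⁻¹wϖ) - B(ϖ, ϖ) < 0`, so some `α_i` with `c_i > 0` has
`⟨wϖ, α_i∨⟩ = -1`. Then `s_i w ∈ W^J`, `ℓ(s_i w) = ℓ(w) - 1` and `s_i wϖ = wϖ + α_i`, and
induction on `ℓ(w)` yields the chain from `y` up to `w`.
-/

theorem Relation.ReflTransGen.exists_labeled_seq {α ι : Type*} [Nonempty ι]
    {r : ι → α → α → Prop} {a b : α}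
    (h : Relation.ReflTransGen (fun u v => ∃ i, r i u v) a b) :
    ∃ (p : ℕ) (f : ℕ → α) (g : ℕ → ι),
      f 0 = a ∧ f p = b ∧ ∀ q < p, r (g (q + 1)) (f q) (f (q + 1)) := by
  induction h with
  | refl => exact ⟨0, fun _ => a, fun _ => Classical.arbitrary ι, rfl, rfl, by simp⟩
  | @tail c d _ hcd ih =>
    obtain ⟨i, hi⟩ := hcd
    obtain ⟨p, f, g, hf0, hfp, hfg⟩ := ih
    refine ⟨p + 1, Function.update f (p + 1) d, Function.update g (p + 1) i, ?_,
      Function.update_self .., fun q hq => ?_⟩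
    · rwa [Function.update_of_ne (by omega)]
    · rcases Nat.lt_succ_iff_lt_or_eq.mp hq with hq | rfl
      · simpa [Function.update_of_ne (by omega : q + 1 ≠ p + 1),
          Function.update_of_ne (by omega : q ≠ p + 1)] using hfg q hq
      · simpa [Function.update_of_ne (by omega : q ≠ q + 1), hfp] using hi

namespace RootSystemData

variable {I : Type} [Fintype I] [DecidableEq I] (R : RootSystemData I)

lemma toLin_toLin (u v : R.W) (x : R.V) : R.toLin u (R.toLin v x) = R.toLin (u * v) x := by
  rw [map_mul]; rfl

lemma toLin_one_apply (x : R.V) : R.toLin 1 x = x := by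
  rw [map_one]; rfl

lemma toLin_inv_toLin (u : R.W) (x : R.V) : R.toLin u⁻¹ (R.toLin u x) = x := by
  rw [toLin_toLin, inv_mul_cancel, toLin_one_apply]

lemma toLin_toLin_inv (u : R.W) (x : R.V) : R.toLin u (R.toLin u⁻¹ x) = x := by
  rw [toLin_toLin, mul_inv_cancel, toLin_one_apply]

lemma B_simple_self_pos (i : I) : 0 < R.B (R.α i) (R.α i) :=
  R.B_pos _ (R.root_simple i)

lemma root_ne_zero {β : R.V} (h : R.isRoot β) : β ≠ 0 := by
  rintro rfl
  simpa using R.B_pos 0 h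

lemma coroot_self {β : R.V} (h : R.isRoot β) : R.coroot β β = 2 := by
  unfold coroot
  field_simp [(R.B_pos β h).ne']

lemma coroot_neg (β x : R.V) : R.coroot (-β) x = -R.coroot β x := by
  simp [coroot, neg_div]

lemma coroot_toLin (u : R.W) (β x : R.V) :
    R.coroot (R.toLin u β) (R.toLin u x) = R.coroot β x := by
  simp only [coroot, R.B_inv]

lemma coroot_toLin_right (u : R.W) (β x : R.V) :
    R.coroot β (R.toLin u x) = R.coroot (R.toLin u⁻¹ β) x := by
  rw [← R.coroot_toLin u (R.toLin u⁻¹ β) x, toLin_toLin_inv]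

lemma B_simple_eq_coroot_mul (i : I) (x : R.V) :
    R.B (R.α i) x = R.coroot (R.α i) x * R.B (R.α i) (R.α i) / 2 := by
  unfold coroot
  field_simp [(R.B_simple_self_pos i).ne']

lemma s_apply (i : I) (x : R.V) : R.toLin (R.s i) x = x - R.coroot (R.α i) x • R.α i :=
  R.s_act i x

lemma s_apply_self (i : I) : R.toLin (R.s i) (R.α i) = -R.α i := by
  rw [s_apply, coroot_self R (R.root_simple i), two_smul]
  abel

lemma s_mul_self (i : I) : R.s i * R.s i = 1 := by
  apply R.faithful
  ext x
  have h : R.coroot (R.α i) (x - R.coroot (R.α i) x • R.α i) = -R.coroot (R.α i) x := by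
    simp only [coroot, map_sub, map_smul, smul_eq_mul]
    field_simp [(R.B_simple_self_pos i).ne']
    ring
  rw [map_one, Module.End.one_apply, ← toLin_toLin, s_apply, s_apply, h, neg_smul]
  abel

lemma s_inv (i : I) : (R.s i)⁻¹ = R.s i :=
  inv_eq_of_mul_eq_one_right (R.s_mul_self i)

lemma s_mul_s_mul (i : I) (w : R.W) : R.s i * (R.s i * w) = w := by
  rw [← mul_assoc, s_mul_self, one_mul]

lemma toLin_conj_s_apply (u : R.W) (i : I) (x : R.V) :
    R.toLin (u * R.s i * u⁻¹) x =
      x - R.coroot (R.toLin u (R.α i)) x • R.toLin u (R.α i) := by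
  rw [← toLin_toLin, ← toLin_toLin, s_apply, map_sub, map_smul, toLin_toLin_inv,
    coroot_toLin_right, inv_inv]

lemma refl_apply {β : R.V} (h : R.isRoot β) (x : R.V) :
    R.toLin (R.refl β) x = x - R.coroot β x • β := by
  rw [refl, dif_pos h, toLin_conj_s_apply, ← (R.root_gen β h).choose_spec.choose_spec]

lemma refl_eq_of_toLin_apply {β : R.V} (h : R.isRoot β) {w : R.W}
    (hw : ∀ x, R.toLin w x = x - R.coroot β x • β) : R.refl β = w :=
  R.faithful (LinearMap.ext fun x => by rw [refl_apply R h, hw])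

lemma refl_conj {β : R.V} (h : R.isRoot β) (u : R.W) :
    R.refl (R.toLin u β) = u * R.refl β * u⁻¹ := by
  refine R.refl_eq_of_toLin_apply (R.root_inv u β h) fun x => ?_
  rw [← toLin_toLin, ← toLin_toLin, refl_apply R h, map_sub, map_smul, toLin_toLin_inv,
    coroot_toLin_right, inv_inv]

lemma refl_smul_simple {c : ℚ} {i : I} (h : R.isRoot (c • R.α i)) :
    R.refl (c • R.α i) = R.s i := by
  have hc : c ≠ 0 := by
    rintro rfl
    exact R.root_ne_zero h (zero_smul ℚ _)
  refine R.refl_eq_of_toLin_apply h fun x => ?_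
  rw [s_apply, smul_smul]
  congr 2
  simp only [coroot, map_smul, LinearMap.smul_apply, smul_eq_mul]
  field_simp [(R.B_simple_self_pos i).ne']

lemma refl_simple (i : I) : R.refl (R.α i) = R.s i := by
  simpa using R.refl_smul_simple (c := 1) (by simpa using R.root_simple i)

def IsNatComb (x : R.V) : Prop :=
  ∃ c : I → ℕ, x = ∑ i, (c i : ℚ) • R.α i

lemma isNatComb_zero : R.IsNatComb 0 :=
  ⟨0, by simp⟩

variable {R} in
lemma IsNatComb.add {x y : R.V} (hx : R.IsNatComb x) (hy : R.IsNatComb y) :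
    R.IsNatComb (x + y) := by
  obtain ⟨c, rfl⟩ := hx
  obtain ⟨d, rfl⟩ := hy
  exact ⟨c + d, by simp [add_smul, Finset.sum_add_distrib]⟩

lemma isNatComb_sum_sub_simple {c : I → ℕ} {i : I} (hi : c i ≠ 0) :
    R.IsNatComb (∑ t, (c t : ℚ) • R.α t - R.α i) := by
  refine ⟨Function.update c i (c i - 1), ?_⟩
  have hrest : ∑ t ∈ Finset.univ.erase i, (Function.update c i (c i - 1) t : ℚ) • R.α t =
      ∑ t ∈ Finset.univ.erase i, (c t : ℚ) • R.α t :=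
    Finset.sum_congr rfl fun t ht => by rw [Function.update_of_ne (Finset.ne_of_mem_erase ht)]
  rw [← Finset.add_sum_erase _ _ (Finset.mem_univ i),
    ← Finset.add_sum_erase _ _ (Finset.mem_univ i), hrest, Function.update_self,
    Nat.cast_sub (Nat.one_le_iff_ne_zero.mpr hi)]
  simp only [Nat.cast_one, sub_smul, one_smul]
  abel

lemma isPos_simple (i : I) : R.IsPos (R.α i) :=
  ⟨R.root_simple i, Pi.single i 1, by simp [Pi.single_apply]⟩

lemma not_isPos_neg {β : R.V} (h : R.IsPos β) : ¬ R.IsPos (-β) := by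
  rintro ⟨-, d, hd⟩
  obtain ⟨hr, c, hc⟩ := h
  have hcd := Fintype.linearIndependent_iff.mp R.indep (fun t => (c t + d t : ℚ))
    (by simp [add_smul, Finset.sum_add_distrib, ← hc, ← hd])
  refine R.root_ne_zero hr (hc ▸ Finset.sum_eq_zero fun t _ => ?_)
  have hct : (c t : ℚ) = 0 := by
    linarith [hcd t, Nat.cast_nonneg (α := ℚ) (c t), Nat.cast_nonneg (α := ℚ) (d t)]
  simp [hct]

lemma isRoot_neg {β : R.V} (h : R.isRoot β) : R.isRoot (-β) := by
  simpa [refl_apply R h, coroot_self R h, two_smul] using R.root_inv (R.refl β) β h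

lemma isPos_neg_of_not_isPos {β : R.V} (h : R.isRoot β) (hn : ¬ R.IsPos β) : R.IsPos (-β) :=
  (R.pos_or_neg β h).elim (fun hc => absurd ⟨h, hc⟩ hn) fun hc => ⟨R.isRoot_neg h, hc⟩

lemma isPos_of_coeff_pos {γ : R.V} (h : R.isRoot γ) {q : I → ℚ}
    (hγ : γ = ∑ t, q t • R.α t) {j : I} (hj : 0 < q j) : R.IsPos γ := by
  by_contra hn
  obtain ⟨-, d, hd⟩ := R.isPos_neg_of_not_isPos h hn
  have := Fintype.linearIndependent_iff.mp R.indep (fun t => q t + d t)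
    (by simp [add_smul, Finset.sum_add_distrib, ← hγ, ← hd]) j
  have : (0 : ℚ) ≤ d j := Nat.cast_nonneg _
  linarith

-- The axioms do not exclude non-reduced root systems: `2 • α i` may be a root.
lemma exists_eq_smul_or_isPos_s_apply {β : R.V} (hβ : R.IsPos β) (i : I) :
    (∃ c : ℚ, β = c • R.α i) ∨ R.IsPos (R.toLin (R.s i) β) := by
  obtain ⟨hr, c, hc⟩ := hβ
  by_cases h : ∃ j ≠ i, c j ≠ 0
  · obtain ⟨j, hji, hj⟩ := h
    refine Or.inr (R.isPos_of_coeff_pos (R.root_inv _ _ hr)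
      (q := fun t => c t - if t = i then R.coroot (R.α i) β else 0) ?_ (j := j) ?_)
    · simp [s_apply, sub_smul, Finset.sum_sub_distrib, ← hc]
    · simpa [hji] using Nat.pos_of_ne_zero hj
  · push Not at h
    refine Or.inl ⟨c i, ?_⟩
    rw [hc, Finset.sum_eq_single i (fun j _ hj => by simp [h j hj]) (by simp)]

lemma exists_word (w : R.W) : ∃ l : List I, (l.map R.s).prod = w := by
  have hw : w ∈ Subgroup.closure (Set.range R.s) := R.gen ▸ Subgroup.mem_top w
  induction hw using Subgroup.closure_induction with
  | mem _ h => obtain ⟨i, rfl⟩ := h; exact ⟨[i], by simp⟩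
  | one => exact ⟨[], by simp⟩
  | mul _ _ _ _ h₁ h₂ =>
    obtain ⟨l₁, rfl⟩ := h₁
    obtain ⟨l₂, rfl⟩ := h₂
    exact ⟨l₁ ++ l₂, by simp⟩
  | inv _ _ h =>
    obtain ⟨l, rfl⟩ := h
    exact ⟨l.reverse, by simp [List.prod_inv_reverse, Function.comp_def, s_inv]⟩

lemma len_le_length (l : List I) : R.len (l.map R.s).prod ≤ l.length :=
  Nat.sInf_le ⟨l, rfl, rfl⟩

lemma exists_reduced_word (w : R.W) :
    ∃ l : List I, l.length = R.len w ∧ (l.map R.s).prod = w := by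
  obtain ⟨l, hl⟩ := R.exists_word w
  exact Nat.sInf_mem (s := {n | ∃ l : List I, l.length = n ∧ (l.map R.s).prod = w})
    ⟨_, l, rfl, hl⟩

lemma len_one : R.len 1 = 0 :=
  Nat.le_zero.mp (R.len_le_length [])

lemma eq_one_of_len_eq_zero {w : R.W} (h : R.len w = 0) : w = 1 := by
  obtain ⟨l, hl, rfl⟩ := R.exists_reduced_word w
  simp [List.length_eq_zero_iff.mp (hl.trans h)]

lemma len_s_mul_le (i : I) (w : R.W) : R.len (R.s i * w) ≤ R.len w + 1 := by
  obtain ⟨l, hl, rfl⟩ := R.exists_reduced_word w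
  simpa [hl] using R.len_le_length (i :: l)

lemma len_le_len_s_mul (i : I) (w : R.W) : R.len w ≤ R.len (R.s i * w) + 1 := by
  simpa [s_mul_s_mul] using R.len_s_mul_le i (R.s i * w)

lemma exists_len_s_mul_lt {w : R.W} (hw : w ≠ 1) : ∃ i, R.len (R.s i * w) < R.len w := by
  obtain ⟨l, hl, rfl⟩ := R.exists_reduced_word w
  cases l with
  | nil => simp at hw
  | cons i l =>
    refine ⟨i, ?_⟩
    simp only [List.map_cons, List.prod_cons, s_mul_s_mul] at hl ⊢
    rw [← hl, List.length_cons]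
    exact Nat.lt_succ_of_le (R.len_le_length l)

lemma exists_word_refl_mul (l : List I) {β : R.V} (hβ : R.IsPos β)
    (hneg : R.IsPos (-R.toLin (l.map R.s).prod⁻¹ β)) :
    ∃ l' : List I,
      (l'.map R.s).prod = R.refl β * (l.map R.s).prod ∧ l'.length + 1 = l.length := by
  induction l generalizing β with
  | nil => exact absurd (by simpa using hneg) (R.not_isPos_neg hβ)
  | cons i l ih =>
    rcases R.exists_eq_smul_or_isPos_s_apply hβ i with ⟨c, rfl⟩ | hβ'
    · exact ⟨l, by simp [R.refl_smul_simple hβ.1, s_mul_s_mul], by simp⟩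
    · rw [List.map_cons, List.prod_cons, mul_inv_rev, s_inv, ← toLin_toLin] at hneg
      obtain ⟨l', hl', hlen⟩ := ih hβ' hneg
      refine ⟨i :: l', ?_, by simp [hlen]⟩
      rw [List.map_cons, List.prod_cons, hl', refl_conj R hβ.1, s_inv]
      simp only [List.map_cons, List.prod_cons, ← mul_assoc, s_mul_self, one_mul]

lemma len_refl_mul_lt {β : R.V} {w : R.W} (hβ : R.IsPos β)
    (hneg : R.IsPos (-R.toLin w⁻¹ β)) : R.len (R.refl β * w) < R.len w := by
  obtain ⟨l, hl, rfl⟩ := R.exists_reduced_word w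
  obtain ⟨l', hl', hlen⟩ := R.exists_word_refl_mul l hβ hneg
  have := R.len_le_length l'
  rw [hl'] at this
  omega

lemma isPos_toLin_inv_of_len_lt {β : R.V} {w : R.W} (hβ : R.IsPos β)
    (h : R.len w < R.len (R.refl β * w)) : R.IsPos (R.toLin w⁻¹ β) := by
  by_contra hn
  have := R.len_refl_mul_lt hβ (R.isPos_neg_of_not_isPos (R.root_inv _ _ hβ.1) hn)
  omega

lemma len_s_mul_lt_iff {i : I} {w : R.W} :
    R.len (R.s i * w) < R.len w ↔ R.IsPos (-R.toLin w⁻¹ (R.α i)) := by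
  have key : ∀ w, R.IsPos (-R.toLin w⁻¹ (R.α i)) → R.len (R.s i * w) < R.len w :=
    fun w h => by simpa [refl_simple] using R.len_refl_mul_lt (R.isPos_simple i) h
  refine ⟨fun h => ?_, key w⟩
  by_contra hn
  have hpos : R.IsPos (-R.toLin (R.s i * w)⁻¹ (R.α i)) := by
    rw [mul_inv_rev, ← toLin_toLin, s_inv, s_apply_self, map_neg]
    exact R.isPos_neg_of_not_isPos (R.isRoot_neg (R.root_inv _ _ (R.root_simple i))) hn
  have := key _ hpos
  rw [s_mul_s_mul] at this
  omega

def IsDominant (ϖ : R.V) : Prop :=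
  ∀ i, 0 ≤ R.coroot (R.α i) ϖ

def LeftWeakCover (J : Set I) (i : I) (u v : R.W) : Prop :=
  R.IsMinRep J v ∧ v = R.s i * u ∧ R.len v = R.len u + 1

variable {R}

lemma IsMinRep.s_mul {J : Set I} {w : R.W} {i : I} (hw : R.IsMinRep J w)
    (h : R.len (R.s i * w) < R.len w) : R.IsMinRep J (R.s i * w) := fun z hz => by
  have := R.len_le_len_s_mul i (w * z)
  have := hw z hz
  rw [mul_assoc]
  omega

namespace IsDominant

variable {ϖ : R.V}

lemma coroot_nonneg (hϖ : R.IsDominant ϖ) {γ : R.V} (hγ : R.IsPos γ) :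
    0 ≤ R.coroot γ ϖ := by
  obtain ⟨hr, c, rfl⟩ := hγ
  have hB : 0 ≤ R.B (∑ i, (c i : ℚ) • R.α i) ϖ := by
    simp only [map_sum, map_smul, LinearMap.sum_apply, LinearMap.smul_apply, smul_eq_mul]
    refine Finset.sum_nonneg fun i _ => mul_nonneg (Nat.cast_nonneg _) ?_
    rw [B_simple_eq_coroot_mul]
    have := hϖ i
    have := R.B_simple_self_pos i
    positivity
  have := R.B_pos _ hr
  unfold coroot
  positivity

lemma len_s_mul_lt_of_coroot_neg (hϖ : R.IsDominant ϖ) {i : I} {w : R.W}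
    (h : R.coroot (R.α i) (R.toLin w ϖ) < 0) : R.len (R.s i * w) < R.len w := by
  rw [coroot_toLin_right] at h
  refine R.len_s_mul_lt_iff.2 (R.isPos_neg_of_not_isPos (R.root_inv _ _ (R.root_simple i)) ?_)
  exact fun hp => (hϖ.coroot_nonneg hp).not_gt h

lemma coroot_nonpos_of_len_s_mul_lt (hϖ : R.IsDominant ϖ) {i : I} {w : R.W}
    (h : R.len (R.s i * w) < R.len w) : R.coroot (R.α i) (R.toLin w ϖ) ≤ 0 := by
  have := hϖ.coroot_nonneg (R.len_s_mul_lt_iff.1 h)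
  rw [coroot_neg] at this
  rw [coroot_toLin_right]
  linarith

lemma B_toLin_lt (hϖ : R.IsDominant ϖ) {z : R.W} (hz : R.toLin z ϖ ≠ ϖ) :
    R.B ϖ (R.toLin z ϖ) < R.B ϖ ϖ := by
  induction hn : R.len z using Nat.strong_induction_on generalizing z with
  | _ n ih =>
  obtain ⟨i, hi⟩ := R.exists_len_s_mul_lt (w := z) fun h1 => hz (h1 ▸ R.toLin_one_apply ϖ)
  obtain ⟨z, rfl⟩ : ∃ z', z = R.s i * z' := ⟨R.s i * z, (R.s_mul_s_mul i z).symm⟩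
  rw [s_mul_s_mul] at hi
  set a := R.coroot (R.α i) (R.toLin z ϖ)
  have ha : 0 ≤ a := not_lt.1 fun ha => (hϖ.len_s_mul_lt_of_coroot_neg ha).not_gt hi
  have hsz : R.toLin (R.s i * z) ϖ = R.toLin z ϖ - a • R.α i := by
    rw [← toLin_toLin, s_apply]
  have hB : R.B ϖ (R.toLin (R.s i * z) ϖ) =
      R.B ϖ (R.toLin z ϖ) - a * (R.coroot (R.α i) ϖ * R.B (R.α i) (R.α i) / 2) := by
    rw [hsz, map_sub, map_smul, smul_eq_mul, R.B_symm ϖ (R.α i), B_simple_eq_coroot_mul]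
  have hd := R.B_simple_self_pos i
  by_cases hz' : R.toLin z ϖ = ϖ
  · have ha0 : a ≠ 0 := fun h0 => hz (by rw [hsz, h0, zero_smul, sub_zero, hz'])
    have haϖ : a = R.coroot (R.α i) ϖ := by simp only [a, hz']
    rw [hB, hz', ← haϖ]
    have : 0 < a * (a * R.B (R.α i) (R.α i) / 2) := by positivity
    linarith
  · have := ih _ (hn ▸ hi) hz' rfl
    have := hϖ i
    have : 0 ≤ a * (R.coroot (R.α i) ϖ * R.B (R.α i) (R.α i) / 2) := by positivity
    linarith

lemma mem_WJ_of_toLin_eq (hϖ : R.IsDominant ϖ) {u : R.W} (hu : R.toLin u ϖ = ϖ) :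
    u ∈ R.WJ {i | R.coroot (R.α i) ϖ = 0} := by
  induction hn : R.len u using Nat.strong_induction_on generalizing u with
  | _ n ih =>
  by_cases h1 : u = 1
  · exact h1 ▸ one_mem _
  obtain ⟨i, hi⟩ := R.exists_len_s_mul_lt h1
  have hi0 : R.coroot (R.α i) ϖ = 0 := by
    have := hϖ.coroot_nonpos_of_len_s_mul_lt hi
    rw [hu] at this
    exact le_antisymm this (hϖ i)
  have hsu : R.toLin (R.s i * u) ϖ = ϖ := by
    rw [← toLin_toLin, hu, s_apply, hi0, zero_smul, sub_zero]
  rw [← R.s_mul_s_mul i u]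
  exact mul_mem (Subgroup.subset_closure ⟨i, hi0, rfl⟩) (ih _ (hn ▸ hi) hsu rfl)

lemma coroot_neg_of_isMinRep (hϖ : R.IsDominant ϖ) {i : I} {w : R.W}
    (hw : R.IsMinRep {i | R.coroot (R.α i) ϖ = 0} w) (h : R.len (R.s i * w) < R.len w) :
    R.coroot (R.α i) (R.toLin w ϖ) < 0 := by
  refine (hϖ.coroot_nonpos_of_len_s_mul_lt h).lt_of_ne fun h0 => ?_
  have hfix : R.toLin (w⁻¹ * (R.s i * w)) ϖ = ϖ := by
    rw [← toLin_toLin, ← toLin_toLin, s_apply, h0, zero_smul, sub_zero, toLin_inv_toLin]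
  have := hw _ (hϖ.mem_WJ_of_toLin_eq hfix)
  rw [mul_inv_cancel_left] at this
  omega

lemma eq_of_isMinRep_of_toLin_eq (hϖ : R.IsDominant ϖ) {y w : R.W}
    (hy : R.IsMinRep {i | R.coroot (R.α i) ϖ = 0} y)
    (hw : R.IsMinRep {i | R.coroot (R.α i) ϖ = 0} w)
    (h : R.toLin y ϖ = R.toLin w ϖ) : y = w := by
  induction hn : R.len w using Nat.strong_induction_on generalizing y w with
  | _ n ih =>
  by_cases hw1 : w = 1
  · subst hw1
    rw [toLin_one_apply] at h
    have := hy _ (inv_mem (hϖ.mem_WJ_of_toLin_eq h))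
    rw [mul_inv_cancel, len_one] at this
    exact R.eq_one_of_len_eq_zero (Nat.le_zero.mp this)
  obtain ⟨i, hi⟩ := R.exists_len_s_mul_lt hw1
  have hyi : R.len (R.s i * y) < R.len y :=
    hϖ.len_s_mul_lt_of_coroot_neg (h ▸ hϖ.coroot_neg_of_isMinRep hw hi)
  refine mul_left_cancel (ih _ (hn ▸ hi) (hy.s_mul hyi) (hw.s_mul hi) ?_ rfl)
  rw [← toLin_toLin, ← toLin_toLin, h]

lemma isNatComb_sub_of_bruhatLE (hϖ : R.IsDominant ϖ) (hmin : R.IsMinuscule ϖ) {y w : R.W}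
    (h : R.bruhatLE y w) : R.IsNatComb (R.toLin y ϖ - R.toLin w ϖ) := by
  induction h with
  | refl => simpa using R.isNatComb_zero
  | @tail b _ _ hstep ih =>
    obtain ⟨⟨β, hβ, rfl⟩, hlen⟩ := hstep
    have hm : R.coroot β (R.toLin b ϖ) = 0 ∨ R.coroot β (R.toLin b ϖ) = 1 := by
      have hpos := R.isPos_toLin_inv_of_len_lt hβ hlen
      have hm0 := hϖ.coroot_nonneg hpos
      have hm := hmin _ hpos.1
      rw [← coroot_toLin_right] at hm0 hm
      rcases hm with h | h | h
      · linarith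
      · exact Or.inl h
      · exact Or.inr h
    have hsub : R.toLin y ϖ - R.toLin (R.refl β * b) ϖ =
        (R.toLin y ϖ - R.toLin b ϖ) + R.coroot β (R.toLin b ϖ) • β := by
      rw [← toLin_toLin, refl_apply R hβ.1]
      abel
    rw [hsub]
    refine ih.add ?_
    rcases hm with h | h <;> rw [h]
    · simpa using R.isNatComb_zero
    · rw [one_smul]
      exact hβ.2

lemma exists_coroot_eq_neg_one (hϖ : R.IsDominant ϖ) (hmin : R.IsMinuscule ϖ) {y w : R.W}
    {c : I → ℕ} (hne : R.toLin y ϖ ≠ R.toLin w ϖ)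
    (hc : R.toLin y ϖ - R.toLin w ϖ = ∑ t, (c t : ℚ) • R.α t) :
    ∃ i, c i ≠ 0 ∧ R.coroot (R.α i) (R.toLin w ϖ) = -1 := by
  have hζ : R.toLin (y⁻¹ * w) ϖ ≠ ϖ := fun h => by
    have := congrArg (R.toLin y) h
    rw [toLin_toLin, mul_inv_cancel_left] at this
    exact hne this.symm
  have hyw : R.B (R.toLin y ϖ) (R.toLin w ϖ) = R.B ϖ (R.toLin (y⁻¹ * w) ϖ) := by
    rw [← R.B_inv y⁻¹, toLin_inv_toLin, toLin_toLin]
  have hB : ∑ t, (c t : ℚ) * R.B (R.α t) (R.toLin w ϖ) < ∑ t : I, 0 := by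
    have : R.B (∑ t, (c t : ℚ) • R.α t) (R.toLin w ϖ) < 0 := by
      rw [← hc, map_sub, LinearMap.sub_apply, hyw, R.B_inv]
      linarith [hϖ.B_toLin_lt hζ]
    simpa [map_sum, LinearMap.sum_apply] using this
  obtain ⟨i, -, hi⟩ := Finset.exists_lt_of_sum_lt hB
  have hci : c i ≠ 0 := fun h0 => by simp [h0] at hi
  have hcor : R.coroot (R.α i) (R.toLin w ϖ) < 0 :=
    div_neg_of_neg_of_pos (by linarith [neg_of_mul_neg_right hi (Nat.cast_nonneg _)])
      (R.B_simple_self_pos i)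
  refine ⟨i, hci, ?_⟩
  have hmem := hmin _ (R.root_inv w⁻¹ _ (R.root_simple i))
  rw [← coroot_toLin_right, Set.mem_insert_iff, Set.mem_insert_iff, Set.mem_singleton_iff] at hmem
  rcases hmem with h | h | h
  · exact h
  all_goals linarith

theorem reflTransGen_leftWeakCover (hϖ : R.IsDominant ϖ) (hmin : R.IsMinuscule ϖ) {y w : R.W}
    (hy : R.IsMinRep {i | R.coroot (R.α i) ϖ = 0} y)
    (hw : R.IsMinRep {i | R.coroot (R.α i) ϖ = 0} w)
    (h : R.IsNatComb (R.toLin y ϖ - R.toLin w ϖ)) :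
    Relation.ReflTransGen
      (fun u v => ∃ i, R.LeftWeakCover {i | R.coroot (R.α i) ϖ = 0} i u v) y w := by
  induction hn : R.len w using Nat.strong_induction_on generalizing w with
  | _ n ih =>
  by_cases hyw : R.toLin y ϖ = R.toLin w ϖ
  · exact hϖ.eq_of_isMinRep_of_toLin_eq hy hw hyw ▸ .refl
  obtain ⟨c, hc⟩ := h
  obtain ⟨i, hci, hi⟩ := hϖ.exists_coroot_eq_neg_one hmin hyw hc
  have hlt : R.len (R.s i * w) < R.len w :=
    hϖ.len_s_mul_lt_of_coroot_neg (by rw [hi]; norm_num)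
  have hsw : R.toLin (R.s i * w) ϖ = R.toLin w ϖ + R.α i := by
    rw [← toLin_toLin, s_apply, hi, neg_one_smul, sub_neg_eq_add]
  have hnat : R.IsNatComb (R.toLin y ϖ - R.toLin (R.s i * w) ϖ) := by
    rw [hsw, ← sub_sub, hc]
    exact R.isNatComb_sum_sub_simple hci
  refine .tail (ih _ (hn ▸ hlt) (hw.s_mul hlt) hnat rfl)
    ⟨i, hw, (R.s_mul_s_mul i w).symm, ?_⟩
  have := R.len_le_len_s_mul i w
  omega

end IsDominant

end RootSystemData

theorem stmt9_general {I : Type} [Fintype I] [DecidableEq I] (R : RootSystemData I)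
    (k : I) (ϖ : R.V) (hfund : R.IsFundamental k ϖ) (hmin : R.IsMinuscule ϖ)
    (J : Set I) (hJ : J = {i | i ≠ k})
    (y w : R.W) (hy : R.IsMinRep J y) (hw : R.IsMinRep J w)
    (hbr : R.bruhatLE y w) :
    ∃ (p : ℕ) (ys : ℕ → R.W) (js : ℕ → I),
      ys 0 = y ∧ ys p = w ∧
      ∀ q < p, R.IsMinRep J (ys (q + 1)) ∧
        ys (q + 1) = R.s (js (q + 1)) * ys q ∧
        R.len (ys (q + 1)) = R.len (ys q) + 1 := by
  have hdom : R.IsDominant ϖ := fun i => by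
    rw [hfund i]
    split_ifs <;> norm_num
  obtain rfl : J = {i | R.coroot (R.α i) ϖ = 0} := by
    ext i
    simp [hJ, hfund i]
  have : Nonempty I := ⟨k⟩
  exact (hdom.reflTransGen_leftWeakCover hmin hy hw
    (hdom.isNatComb_sub_of_bruhatLE hmin hbr)).exists_labeled_seq

/-- With `ϖ_k` minuscule, the Bruhat order on `W^J` agrees with the left weak
order on `W^J`. -/
theorem stmt9 {I : Type} [Fintype I] [DecidableEq I] (R : RootSystemData I)
    (hirr : R.IsIrreducible)
    (htype : R.IsSimplyLaced ∨ ∃ (n : ℕ) (e : I ≃ Fin n), IsTypeB R n e)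
    (k : I) (ϖ : R.V) (hfund : R.IsFundamental k ϖ) (hmin : R.IsMinuscule ϖ)
    (J : Set I) (hJ : J = {i | i ≠ k})
    (y w : R.W) (hy : R.IsMinRep J y) (hw : R.IsMinRep J w)
    (hbr : R.bruhatLE y w) :
    ∃ (p : ℕ) (ys : ℕ → R.W) (js : ℕ → I),
      ys 0 = y ∧ ys p = w ∧
      ∀ q < p, R.IsMinRep J (ys (q + 1)) ∧
        ys (q + 1) = R.s (js (q + 1)) * ys q ∧
        R.len (ys (q + 1)) = R.len (ys q) + 1 :=
  stmt9_general R k ϖ hfund hmin J hJ y w hy hw hbr
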